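/- (Splittability of III* into I₇ + I₁ + I₁) There exist matrices C, B₁, B₂ ∈ SL(2,ℤ) with C conjugate in SL(2,ℤ) to A_{I₇} = [[1,7],[0,1]] and B₁, B₂ each conjugate to A_{I₁} = [[1,1],[0,1]], such that the product C·B₁·B₂ is conjugate in SL(2,ℤ) to A_{III*} = [[0,-1],[1,0]]. In other words, the fiber type III* admits a monodromy decomposition into I₇ + I₁ + I₁. -/

import Mathlib

/-- The special linear group `SL(2, ℤ)`. -/
abbrev SL2Z := Matrix.SpecialLinearGroup (Fin 2) ℤ

/-- `A` is conjugate to `B` in `SL(2, ℤ)`: there is `P ∈ SL(2,ℤ)` with `P * A * P⁻¹ = B`. -/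
def ConjTo (A B : SL2Z) : Prop := ∃ P : SL2Z, P * A * P⁻¹ = B

/-- The standard monodromy matrix `A_{I_n} = [[1,n],[0,1]]`. -/
def AI (n : ℤ) : SL2Z := ⟨!![1, n; 0, 1], by simp [Matrix.det_fin_two_of]⟩

/-- The standard monodromy matrix `A_{II} = [[1,1],[-1,0]]`. -/
def AII : SL2Z := ⟨!![1, 1; -1, 0], by norm_num [Matrix.det_fin_two_of]⟩

/-- The standard monodromy matrix `A_{III} = [[0,1],[-1,0]]`. -/
def AIII : SL2Z := ⟨!![0, 1; -1, 0], by norm_num [Matrix.det_fin_two_of]⟩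

/-- The standard monodromy matrix `A_{IV} = [[0,1],[-1,-1]]`. -/
def AIV : SL2Z := ⟨!![0, 1; -1, -1], by norm_num [Matrix.det_fin_two_of]⟩

/-- The standard monodromy matrix `A_{I₀*} = -I`. -/
def negI : SL2Z := ⟨!![-1, 0; 0, -1], by norm_num [Matrix.det_fin_two_of]⟩

/-- The standard monodromy matrix `A_{I_n*} = -[[1,n],[0,1]]`. -/
def AIstar (n : ℤ) : SL2Z := ⟨!![-1, -n; 0, -1], by simp [Matrix.det_fin_two_of]⟩

/-- The standard monodromy matrix `A_{IV*} = [[-1,-1],[1,0]]`. -/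
def AIVstar : SL2Z := ⟨!![-1, -1; 1, 0], by norm_num [Matrix.det_fin_two_of]⟩

/-- The standard monodromy matrix `A_{III*} = [[0,-1],[1,0]]`. -/
def AIIIstar : SL2Z := ⟨!![0, -1; 1, 0], by norm_num [Matrix.det_fin_two_of]⟩

/-- The standard monodromy matrix `A_{II*} = [[0,-1],[1,1]]`. -/
def AIIstar : SL2Z := ⟨!![0, -1; 1, 1], by norm_num [Matrix.det_fin_two_of]⟩

/-!
Conjugating `A_{I_n}` by `P` gives the transvection `I + n·v·v^⊥` along the first column `v`
of `P`. For `v = (2, -1)` and `v = (1, -2)` these are `[[3,4],[-1,-1]]` and `[[3,1],[-4,-1]]`, and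
`A_{I₇} · [[3,4],[-1,-1]] · [[3,1],[-4,-1]] = A_{III*}` on the nose, so no further conjugation is needed.
-/

open Matrix Matrix.SpecialLinearGroup

theorem ConjTo.refl (A : SL2Z) : ConjTo A A := ⟨1, by simp⟩

theorem conjTo_mul_mul_inv (P A : SL2Z) : ConjTo (P * A * P⁻¹) A := ⟨P⁻¹, by group⟩

theorem coe_mul_AI_mul_inv (P : SL2Z) (n : ℤ) :
    ((P * AI n * P⁻¹ : SL2Z) : Matrix (Fin 2) (Fin 2) ℤ) =
      !![1 - n * P 0 0 * P 1 0, n * P 0 0 ^ 2; -n * P 1 0 ^ 2, 1 + n * P 0 0 * P 1 0] := by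
  have hdet : P 0 0 * P 1 1 - P 0 1 * P 1 0 = 1 := by rw [← det_fin_two]; exact P.det_coe
  rw [coe_mul, coe_mul, coe_inv, adjugate_fin_two]
  ext i j
  fin_cases i <;> fin_cases j <;>
    simp only [AI, Fin.isValue, Fin.zero_eta, Fin.mk_one, mul_apply, of_apply, cons_val',
      cons_val_fin_one, Fin.sum_univ_two, cons_val_zero, cons_val_one] <;> grind

theorem AI_seven_mul_conj_AI_one_mul_conj_AI_one {P Q : SL2Z}
    (hP : P 0 0 = 2 ∧ P 1 0 = -1) (hQ : Q 0 0 = 1 ∧ Q 1 0 = -2) :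
    AI 7 * (P * AI 1 * P⁻¹) * (Q * AI 1 * Q⁻¹) = AIIIstar := by
  ext : 1
  rw [coe_mul, coe_mul, coe_mul_AI_mul_inv, coe_mul_AI_mul_inv, hP.1, hP.2, hQ.1, hQ.2]
  simp [AI, AIIIstar]

/-- The fiber type `III*` admits a monodromy decomposition into `I₇ + I₁ + I₁`. -/
theorem IIIstar_decomposition_I7_I1_I1 :
    ∃ C B₁ B₂ : SL2Z, ConjTo C (AI 7) ∧ ConjTo B₁ (AI 1) ∧ ConjTo B₂ (AI 1) ∧
      ConjTo (C * B₁ * B₂) AIIIstar := by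
  let P : SL2Z := ⟨!![2, 1; -1, 0], by norm_num [det_fin_two_of]⟩
  let Q : SL2Z := ⟨!![1, 0; -2, 1], by norm_num [det_fin_two_of]⟩
  have hprod : AI 7 * (P * AI 1 * P⁻¹) * (Q * AI 1 * Q⁻¹) = AIIIstar :=
    AI_seven_mul_conj_AI_one_mul_conj_AI_one ⟨rfl, rfl⟩ ⟨rfl, rfl⟩
  refine ⟨AI 7, P * AI 1 * P⁻¹, Q * AI 1 * Q⁻¹, ConjTo.refl _, conjTo_mul_mul_inv _ _,
    conjTo_mul_mul_inv _ _, hprod ▸ ConjTo.refl _⟩
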